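/- Let G=(V,E_L,E_R) and G'=(V',E'_L,E'_R) be achievement positional games with V∩V'=∅ such that Left has a winning strategy on G as first player and Right has a winning strategy on G' as first player. Let d be the Left-delay of G and d' the Right-delay of G'. If d ≤ d', then Left has a winning strategy on G∪G' as first player; if d' ≤ d, then Right has a winning strategy on G∪G' as first player. -/

import Mathlib

namespace APG

/-- The two players: Left and Right. -/
inductive Player : Type
  | L : Player
  | R : Player
deriving DecidableEq, Repr

/-- The opponent of a player. -/
def Player.other : Player → Player
  | .L => .R
  | .R => .L

/-- An achievement positional game: a finite vertex set together with the set of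
blue edges (Left's winning sets) and the set of red edges (Right's winning sets). -/
structure Game : Type where
  V : Finset ℕ
  EL : Finset (Finset ℕ)
  ER : Finset (Finset ℕ)

/-- The edges are nonempty subsets of the vertex set. -/
def WellFormed (G : Game) : Prop :=
  (∀ e ∈ G.EL, e ⊆ G.V ∧ e.Nonempty) ∧ (∀ e ∈ G.ER, e ⊆ G.V ∧ e.Nonempty)

/-- The winning sets of a given player. -/
def Game.edges (G : Game) : Player → Finset (Finset ℕ)
  | .L => G.EL
  | .R => G.ER

/-- The player who makes the `i`-th move (0-indexed) when `s` moves first. -/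
def mover (s : Player) (i : ℕ) : Player := if i % 2 = 0 then s else s.other

/-- The set of vertices picked by player `p` along the history `h`
(the chronological list of the moves played so far), when `s` moved first. -/
def picked (s p : Player) (h : List ℕ) : Finset ℕ :=
  ((Finset.range h.length).filter fun i => mover s i = p).image fun i => h.getD i 0

/-- The set `S` of picked vertices fills some edge of `E`. -/
def fills (E : Finset (Finset ℕ)) (S : Finset ℕ) : Prop := ∃ e ∈ E, e ⊆ S

/-- The game is over: some player has picked all the vertices of one of their edges. -/
def ended (G : Game) (s : Player) (h : List ℕ) : Prop :=
  fills G.EL (picked s .L h) ∨ fills G.ER (picked s .R h)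

/-- `h` is a legal history: no vertex is picked twice, every picked vertex belongs to
the board, and no move is made after the game has ended. -/
def ValidHist (G : Game) (s : Player) (h : List ℕ) : Prop :=
  h.Nodup ∧ (∀ x ∈ h, x ∈ G.V) ∧ ∀ k, k < h.length → ¬ ended G s (h.take k)

/-- A strategy: a map assigning to each position (history) a vertex to pick. -/
abbrev Strategy := List ℕ → ℕ

/-- Along `h`, every move of player `p` agrees with the strategy `σ`. -/
def Follows (s p : Player) (σ : Strategy) (h : List ℕ) : Prop :=
  ∀ k, k < h.length → mover s k = p → h.getD k 0 = σ (h.take k)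

/-- A finished play: either the game has ended or all vertices have been picked. -/
def Complete (G : Game) (s : Player) (h : List ℕ) : Prop :=
  ended G s h ∨ h.length = G.V.card

/-- The strategy `σ` of player `p` always suggests a legal move (an unpicked vertex)
whenever the game is not over and it is `p`'s turn. -/
def Legal (G : Game) (s p : Player) (σ : Strategy) : Prop :=
  ∀ h, ValidHist G s h → Follows s p σ h → ¬ ended G s h → h.length < G.V.card →
    mover s h.length = p → σ h ∈ G.V ∧ σ h ∉ h

/-- Player `p` has a winning strategy on `G` when `s` moves first: following it,
every finished play ends with `p` having filled one of their edges (and, the game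
having ended right there, the opponent has not filled an edge first). -/
def WinsAs (G : Game) (s p : Player) : Prop :=
  ∃ σ : Strategy, Legal G s p σ ∧
    ∀ h, ValidHist G s h → Follows s p σ h → Complete G s h →
      fills (G.edges p) (picked s p h)

/-- Player `p` has a non-losing strategy on `G` when `s` moves first: following it,
the opponent never fills one of their edges. -/
def NonLosingAs (G : Game) (s p : Player) : Prop :=
  ∃ σ : Strategy, Legal G s p σ ∧
    ∀ h, ValidHist G s h → Follows s p σ h → Complete G s h →
      ¬ fills (G.edges p.other) (picked s p.other h)

/-- The possible results of the game, for a fixed starting player. -/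
inductive Result : Type
  | Lwin : Result
  | draw : Result
  | Rwin : Result
deriving DecidableEq, Repr

/-- The result of `G` with optimal play, when `s` moves first, is `r`:
a win for a player means that player has a winning strategy, a draw means
both players have non-losing strategies. -/
def resultIs (G : Game) (s : Player) : Result → Prop
  | .Lwin => WinsAs G s .L
  | .Rwin => WinsAs G s .R
  | .draw => NonLosingAs G s .L ∧ NonLosingAs G s .R

/-- An outcome: the pair of results with optimal play
(when Left starts, when Right starts). -/
abbrev Outcome := Result × Result

/-- `G` has outcome `o`. -/
def hasOutcome (G : Game) (o : Outcome) : Prop :=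
  resultIs G .L o.1 ∧ resultIs G .R o.2

/-- Numerical value of a result, from Left's point of view:
Right wins < draw < Left wins. -/
def Result.val : Result → ℕ
  | .Rwin => 0
  | .draw => 1
  | .Lwin => 2

/-- The partial order `≤_L` on outcomes, comparing both components simultaneously
from Left's point of view. -/
def outLE (o o' : Outcome) : Prop := o.1.val ≤ o'.1.val ∧ o.2.val ≤ o'.2.val

def oL : Outcome := (.Lwin, .Lwin)
def oLminus : Outcome := (.Lwin, .draw)
def oN : Outcome := (.Lwin, .Rwin)
def oD : Outcome := (.draw, .draw)
def oRminus : Outcome := (.draw, .Rwin)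
def oR : Outcome := (.Rwin, .Rwin)

/-- The updated game `G_u` after Left has picked `u`. -/
def subL (G : Game) (u : ℕ) : Game where
  V := G.V.erase u
  EL := G.EL.image fun e => e.erase u
  ER := G.ER.filter fun e => u ∉ e

/-- The updated game `G^u` after Right has picked `u`. -/
def subR (G : Game) (u : ℕ) : Game where
  V := G.V.erase u
  EL := G.EL.filter fun e => u ∉ e
  ER := G.ER.image fun e => e.erase u

/-- The updated game `G_u^v` after Left has picked `u` and Right has picked `v`. -/
def updLR (G : Game) (u v : ℕ) : Game where
  V := (G.V.erase u).erase v
  EL := (G.EL.filter fun e => v ∉ e).image fun e => e.erase u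
  ER := (G.ER.filter fun e => u ∉ e).image fun e => e.erase v

/-- The disjoint union of two games. -/
def gunion (G G' : Game) : Game where
  V := G.V ∪ G'.V
  EL := G.EL ∪ G'.EL
  ER := G.ER ∪ G'.ER

/-! ### The scoring games `sc_L` and `sc_R` and the associated delays

In the scoring game `sc_p(G)`, player `p` moves first and must always pick a vertex,
while the opponent may, on each of their turns, either pick a vertex or pass (`none`).
The game ends when `p` fills one of their edges, the opponent fills one of theirs, or
all vertices have been picked. The score is the number of the opponent's pass moves
if `p` has filled one of their edges, and `+∞` otherwise; `p` minimizes the score and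
the opponent maximizes it. -/

/-- A history of the scoring game: `none` stands for a pass move. -/
abbrev SHist := List (Option ℕ)

/-- The list of vertices actually picked along a scoring history. -/
def allPicks (h : SHist) : List ℕ := h.filterMap id

/-- The set of vertices picked by player `q` along the scoring history `h`,
in the scoring game where `p` moves first. -/
def spicked (p q : Player) (h : SHist) : Finset ℕ :=
  (((h.zipIdx.map Prod.swap).filter fun ix => decide (mover p ix.1 = q)).filterMap Prod.snd).toFinset

/-- The number of pass moves made by `p`'s opponent along `h`. -/
def passCount (p : Player) (h : SHist) : ℕ :=
  ((h.zipIdx.map Prod.swap).filter fun ix => decide (mover p ix.1 = p.other ∧ ix.2 = none)).length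

/-- The scoring game is over: `p` has filled one of their edges, the opponent has filled
one of theirs, or all vertices have been picked. -/
def sEnded (G : Game) (p : Player) (h : SHist) : Prop :=
  fills (G.edges p) (spicked p p h) ∨ fills (G.edges p.other) (spicked p p.other h) ∨
    G.V ⊆ (allPicks h).toFinset

/-- `h` is a legal history of the scoring game `sc_p(G)`: no vertex is picked twice,
picked vertices belong to the board, `p` never passes, and no move is made after
the game has ended. -/
def sValid (G : Game) (p : Player) (h : SHist) : Prop :=
  (allPicks h).Nodup ∧ (∀ x ∈ allPicks h, x ∈ G.V) ∧
    (∀ k, k < h.length → mover p k = p → h.getD k none ≠ none) ∧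
    (∀ k, k < h.length → ¬ sEnded G p (h.take k))

/-- Along `h`, every move of player `p` agrees with the strategy `σ`. -/
def sFollows (p : Player) (σ : SHist → ℕ) (h : SHist) : Prop :=
  ∀ k, k < h.length → mover p k = p → h.getD k none = some (σ (h.take k))

/-- The strategy `σ` of player `p` in the scoring game always suggests a legal move. -/
def sLegal (G : Game) (p : Player) (σ : SHist → ℕ) : Prop :=
  ∀ h, sValid G p h → sFollows p σ h → ¬ sEnded G p h → mover p h.length = p →
    σ h ∈ G.V ∧ σ h ∉ allPicks h

/-- Player `p` can ensure a score at most `n` in the scoring game `sc_p(G)`: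
they have a strategy guaranteeing that every finished play ends with `p` having
filled one of their edges with the opponent having passed at most `n` times. -/
def canEnsure (G : Game) (p : Player) (n : ℕ) : Prop :=
  ∃ σ : SHist → ℕ, sLegal G p σ ∧
    ∀ h, sValid G p h → sFollows p σ h → sEnded G p h →
      fills (G.edges p) (spicked p p h) ∧ passCount p h ≤ n

/-- The delay of `G` for player `p`: the optimal score of the scoring game `sc_p(G)`,
i.e. the least `n` such that `p` can ensure a score at most `n`. For `p = Left` this is
the Left-delay of `G`, for `p = Right` the Right-delay. -/
noncomputable def delay (G : Game) (p : Player) : ℕ := sInf {n : ℕ | canEnsure G p n}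

/-!
Say Left moves first and `d ≤ d'` (the other case is symmetric). On `G`, Left follows a
strategy `σ` realising her delay `d` in `sc_L(G)`. Right's moves in `G'` she answers by a
strategy `τ` of the passing player in `sc_R(G')` that keeps Right unable to ensure a score
below `d'`: such a `τ` exists because from any position where Right cannot, some action of
the passing player keeps it so. Whenever `τ` passes, Left plays in `G` instead, and `σ`
reads Right's move as a pass. So Right passes in `sc_L(G)` at least as often as Left passes
in `sc_R(G')`; Right would need `d'` passes of Left to fill a red edge of `G'`, while Left
fills a blue edge of `G` before Right has passed `d` times.

That `d` is finite comes from replaying `sc_L(G)` as a play of `G` in which every pass of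
Right becomes a fresh pick.
-/

namespace Player

@[simp] lemma other_other (p : Player) : p.other.other = p := by cases p <;> rfl

@[simp] lemma other_ne (p : Player) : p.other ≠ p := by cases p <;> decide

@[simp] lemma ne_other (p : Player) : p ≠ p.other := by cases p <;> decide

end Player

lemma mover_of_even (s : Player) {k : ℕ} (hk : k % 2 = 0) : mover s k = s := by
  simp [mover, hk]

lemma mover_of_odd (s : Player) {k : ℕ} (hk : k % 2 = 1) : mover s k = s.other := by
  simp [mover, hk]

lemma mover_eq_self_iff (s : Player) (k : ℕ) : mover s k = s ↔ k % 2 = 0 := by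
  rcases Nat.mod_two_eq_zero_or_one k with hk | hk <;> simp [mover, hk]

lemma mover_eq_other_of_ne {s : Player} {k : ℕ} (hk : mover s k ≠ s) : mover s k = s.other := by
  unfold mover at *; split_ifs at * <;> simp_all

@[simp] lemma mover_add_one (s : Player) (k : ℕ) : mover s (k + 1) = (mover s k).other := by
  rcases Nat.mod_two_eq_zero_or_one k with hk | hk <;> simp [mover, hk, Nat.add_mod]

lemma fills_mono {E E' : Finset (Finset ℕ)} {S S' : Finset ℕ}
    (hE : E ⊆ E') (hS : S ⊆ S') : fills E S → fills E' S' := fun ⟨e, he, heS⟩ =>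
  ⟨e, hE he, heS.trans hS⟩

lemma WellFormed.subset {G : Game} (hG : WellFormed G) {q : Player} {e : Finset ℕ}
    (he : e ∈ G.edges q) : e ⊆ G.V := by
  cases q
  exacts [(hG.1 e he).1, (hG.2 e he).1]

lemma WellFormed.not_fills_empty {G : Game} (hG : WellFormed G) (q : Player) :
    ¬ fills (G.edges q) ∅ := by
  rintro ⟨e, he, hsub⟩
  have hne : e.Nonempty := by cases q; exacts [(hG.1 e he).2, (hG.2 e he).2]
  exact hne.ne_empty (Finset.subset_empty.mp hsub)

lemma gunion_edges (A B : Game) (q : Player) :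
    (gunion A B).edges q = A.edges q ∪ B.edges q := by
  cases q <;> rfl

/-! ### Histories of the positional game -/

lemma mem_picked {s q : Player} {h : List ℕ} {y : ℕ} :
    y ∈ picked s q h ↔ ∃ i < h.length, mover s i = q ∧ h.getD i 0 = y := by
  simp [picked, and_assoc]

@[simp] lemma picked_nil (s q : Player) : picked s q [] = ∅ := rfl

lemma picked_snoc (s q : Player) (h : List ℕ) (x : ℕ) :
    picked s q (h ++ [x]) =
      if mover s h.length = q then insert x (picked s q h) else picked s q h := by
  ext y
  have key : (∃ i < h.length + 1, mover s i = q ∧ (h ++ [x]).getD i 0 = y) ↔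
      y ∈ picked s q h ∨ (mover s h.length = q ∧ x = y) := by
    rw [mem_picked]
    constructor
    · rintro ⟨i, hi, hmi, rfl⟩
      rcases Nat.lt_succ_iff_lt_or_eq.mp hi with hi | rfl
      · exact .inl ⟨i, hi, hmi, (List.getD_append _ _ _ _ hi).symm⟩
      · exact .inr ⟨hmi, by simp⟩
    · rintro (⟨i, hi, hmi, rfl⟩ | ⟨hmi, rfl⟩)
      · exact ⟨i, by omega, hmi, List.getD_append _ _ _ _ hi⟩
      · exact ⟨h.length, by omega, hmi, by simp⟩
  rw [mem_picked, List.length_append, List.length_singleton, key]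
  split_ifs with hm <;> simp [hm, eq_comm, or_comm]

lemma toFinset_eq_picked_union (s : Player) (h : List ℕ) :
    h.toFinset = picked s .L h ∪ picked s .R h := by
  induction h using List.reverseRecOn with
  | nil => rfl
  | append_singleton h x ih =>
    rw [picked_snoc, picked_snoc, List.toFinset_append, ih]
    cases mover s h.length <;> simp [Finset.union_comm, Finset.union_left_comm]

lemma follows_snoc {s p : Player} {σ : Strategy} {h : List ℕ} {x : ℕ} :
    Follows s p σ (h ++ [x]) ↔ Follows s p σ h ∧ (mover s h.length = p → x = σ h) := by
  simp only [Follows, List.length_append, List.length_singleton, Nat.lt_succ_iff_lt_or_eq,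
    or_imp, forall_and, forall_eq]
  refine and_congr (forall₂_congr fun k hk => ?_) (by simp)
  rw [List.getD_append _ _ _ _ hk, List.take_append_of_le_length hk.le]

lemma validHist_snoc {G : Game} {s : Player} {h : List ℕ} {x : ℕ} :
    ValidHist G s (h ++ [x]) ↔ ValidHist G s h ∧ x ∉ h ∧ x ∈ G.V ∧ ¬ ended G s h := by
  simp only [ValidHist, List.nodup_append, List.length_append, List.length_singleton,
    Nat.lt_succ_iff_lt_or_eq, or_imp, forall_and, forall_eq, List.mem_append,
    List.mem_singleton, List.take_left]
  have htake : ∀ k < h.length, (h ++ [x]).take k = h.take k := fun k hk =>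
    List.take_append_of_le_length hk.le
  simp +contextual only [htake]
  aesop

lemma ended_iff_player (G : Game) (s p : Player) (h : List ℕ) :
    ended G s h ↔
      fills (G.edges p) (picked s p h) ∨ fills (G.edges p.other) (picked s p.other h) := by
  cases p <;> simp [ended, Game.edges, Player.other, or_comm]

/-! ### Histories of the scoring game -/

@[simp] lemma allPicks_nil : allPicks [] = [] := rfl

lemma allPicks_snoc (h : SHist) (a : Option ℕ) :
    allPicks (h ++ [a]) = allPicks h ++ a.toList := by
  cases a <;> simp [allPicks]

@[simp] lemma spicked_nil (p q : Player) : spicked p q [] = ∅ := rfl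

lemma spicked_snoc (p q : Player) (h : SHist) (a : Option ℕ) :
    spicked p q (h ++ [a]) =
      if mover p h.length = q then a.toFinset ∪ spicked p q h else spicked p q h := by
  unfold spicked
  rw [List.zipIdx_append]
  split_ifs with hm <;> cases a <;> simp [List.filter_append, hm, Finset.union_comm]

@[simp] lemma spicked_snoc_none (p q : Player) (h : SHist) :
    spicked p q (h ++ [none]) = spicked p q h := by
  rw [spicked_snoc]; split_ifs <;> simp

lemma spicked_snoc_some {p q : Player} {h : SHist} (x : ℕ) (hm : mover p h.length = q) :
    spicked p q (h ++ [some x]) = insert x (spicked p q h) := by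
  rw [spicked_snoc, if_pos hm]; rfl

lemma spicked_snoc_of_ne {p q : Player} {h : SHist} (a : Option ℕ) (hm : mover p h.length ≠ q) :
    spicked p q (h ++ [a]) = spicked p q h := by
  rw [spicked_snoc, if_neg hm]

lemma allPicks_toFinset_eq (p : Player) (h : SHist) :
    (allPicks h).toFinset = spicked p .L h ∪ spicked p .R h := by
  induction h using List.reverseRecOn with
  | nil => rfl
  | append_singleton h a ih =>
    rw [allPicks_snoc, List.toFinset_append, ih, spicked_snoc, spicked_snoc]
    cases mover p h.length <;> cases a <;> simp [Finset.union_comm, Finset.union_left_comm]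

lemma spicked_subset (p q : Player) (h : SHist) : spicked p q h ⊆ (allPicks h).toFinset := by
  rw [allPicks_toFinset_eq p]
  cases q
  exacts [Finset.subset_union_left, Finset.subset_union_right]

lemma passCount_snoc (p : Player) (h : SHist) (a : Option ℕ) :
    passCount p (h ++ [a]) =
      passCount p h + if mover p h.length = p.other ∧ a = none then 1 else 0 := by
  unfold passCount
  rw [List.zipIdx_append]
  split_ifs with hc <;> simp [List.filter_append, hc]

@[simp] lemma passCount_snoc_some (p : Player) (h : SHist) (x : ℕ) :
    passCount p (h ++ [some x]) = passCount p h := by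
  simp [passCount_snoc]

lemma passCount_snoc_none {p : Player} {h : SHist} (hm : mover p h.length = p.other) :
    passCount p (h ++ [none]) = passCount p h + 1 := by
  simp [passCount_snoc, hm]

lemma passCount_mono (p : Player) {h₁ h₂ : SHist} (hpre : h₁ <+: h₂) :
    passCount p h₁ ≤ passCount p h₂ := by
  obtain ⟨t, rfl⟩ := hpre
  induction t using List.reverseRecOn with
  | nil => simp
  | append_singleton t a ih =>
    rw [← List.append_assoc, passCount_snoc]
    omega

lemma passCount_le_length (p : Player) (h : SHist) : passCount p h ≤ h.length := by
  unfold passCount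
  exact (List.length_filter_le _ _).trans (by simp)

@[simp] lemma sEnded_snoc_none (G : Game) (p : Player) (h : SHist) :
    sEnded G p (h ++ [none]) ↔ sEnded G p h := by
  simp [sEnded, allPicks_snoc]

lemma sFollows_snoc {p : Player} {σ : SHist → ℕ} {h : SHist} {a : Option ℕ} :
    sFollows p σ (h ++ [a]) ↔ sFollows p σ h ∧ (mover p h.length = p → a = some (σ h)) := by
  simp only [sFollows, List.length_append, List.length_singleton, Nat.lt_succ_iff_lt_or_eq,
    or_imp, forall_and, forall_eq, List.take_left]
  refine and_congr (forall₂_congr fun k hk => ?_) (by simp)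
  rw [List.getD_append _ _ _ _ hk, List.take_append_of_le_length hk.le]

lemma sValid_snoc {G : Game} {p : Player} {h : SHist} {a : Option ℕ} :
    sValid G p (h ++ [a]) ↔
      sValid G p h ∧ (mover p h.length = p → a ≠ none) ∧ ¬ sEnded G p h ∧
        ∀ x, a = some x → x ∈ G.V ∧ x ∉ allPicks h := by
  have htake : ∀ k < h.length, (h ++ [a]).take k = h.take k := fun k hk =>
    List.take_append_of_le_length hk.le
  have hget : ∀ k < h.length, (h ++ [a]).getD k none = h.getD k none := fun k hk =>
    List.getD_append _ _ _ _ hk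
  cases a <;>
    simp +contextual only [sValid, allPicks_snoc, List.nodup_append, List.length_append,
      List.length_singleton, Nat.lt_succ_iff_lt_or_eq, or_imp, forall_and, forall_eq,
      List.mem_append, List.take_left, htake, hget] <;>
    aesop

lemma sValid_nil {G : Game} {p : Player} : sValid G p [] := by
  simp [sValid]

lemma sFollows_nil {p : Player} {σ : SHist → ℕ} : sFollows p σ [] := by
  simp [sFollows]

lemma sValid.prefix {G : Game} {p : Player} {h₁ h₂ : SHist} (hv : sValid G p h₂)
    (hpre : h₁ <+: h₂) : sValid G p h₁ := by
  obtain ⟨t, rfl⟩ := hpre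
  obtain ⟨hnd, hmem, hpass, hend⟩ := hv
  have hsub : (allPicks h₁).Sublist (allPicks (h₁ ++ t)) := by
    simp [allPicks, List.filterMap_append]
  refine ⟨hnd.sublist hsub, fun y hy => hmem y (hsub.subset hy), fun k hk hm => ?_,
    fun k hk => ?_⟩
  · have := hpass k (by simp; omega) hm
    rwa [List.getD_append _ _ _ _ hk] at this
  · simpa [List.take_append_of_le_length hk.le] using hend k (by simp; omega)

section Moves

variable {G : Game} {p : Player} {σ : SHist → ℕ} {h : SHist}

lemma sValid.snoc_none (hv : sValid G p h) (hm : mover p h.length = p.other)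
    (hne : ¬ sEnded G p h) : sValid G p (h ++ [none]) :=
  sValid_snoc.mpr ⟨hv, fun hp => absurd (hm.symm.trans hp) p.other_ne, hne, by simp⟩

lemma sValid.snoc_some (hv : sValid G p h) (hne : ¬ sEnded G p h) {x : ℕ} (hx : x ∈ G.V)
    (hxh : x ∉ allPicks h) : sValid G p (h ++ [some x]) :=
  sValid_snoc.mpr ⟨hv, by simp, hne, by simp [hx, hxh]⟩

lemma sFollows.snoc_of_mover_other (hf : sFollows p σ h) (hm : mover p h.length = p.other)
    (a : Option ℕ) : sFollows p σ (h ++ [a]) :=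
  sFollows_snoc.mpr ⟨hf, fun hp => absurd (hm.symm.trans hp) p.other_ne⟩

lemma sFollows.snoc_self (hf : sFollows p σ h) : sFollows p σ (h ++ [some (σ h)]) :=
  sFollows_snoc.mpr ⟨hf, fun _ => rfl⟩

-- The opponent passes throughout.
lemma sLegal.exists_sEnded_extension_of_mover_self (hleg : sLegal G p σ) (n : ℕ) :
    ∀ h : SHist, (G.V \ (allPicks h).toFinset).card < n → mover p h.length = p →
      sValid G p h → sFollows p σ h →
      ∃ h', h <+: h' ∧ sValid G p h' ∧ sFollows p σ h' ∧ sEnded G p h' := by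
  induction n with
  | zero => simp
  | succ n ih =>
    intro h hcard hm hv hf
    by_cases hne : sEnded G p h
    · exact ⟨h, List.prefix_refl h, hv, hf, hne⟩
    obtain ⟨huV, huh⟩ := hleg h hv hf hne hm
    have hv₁ := hv.snoc_some hne huV huh
    have hf₁ := hf.snoc_self
    by_cases hne₁ : sEnded G p (h ++ [some (σ h)])
    · exact ⟨_, List.prefix_append _ _, hv₁, hf₁, hne₁⟩
    have hm₁ : mover p (h ++ [some (σ h)]).length = p.other := by simp [hm]
    have hcard₂ : (G.V \ (allPicks (h ++ [some (σ h)] ++ [none])).toFinset).card < n := by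
      have hu : σ h ∈ G.V \ (allPicks h).toFinset := by simp [huV, huh]
      have heq : (allPicks (h ++ [some (σ h)] ++ [none])).toFinset =
          insert (σ h) (allPicks h).toFinset := by
        rw [allPicks_snoc, allPicks_snoc]; ext; simp
      rw [heq, Finset.sdiff_insert]
      exact (Finset.card_erase_lt_of_mem hu).trans_le (by omega)
    obtain ⟨h', hpre, hrest⟩ := ih _ hcard₂ (by simp [hm]) (hv₁.snoc_none hm₁ hne₁)
      (hf₁.snoc_of_mover_other hm₁ none)
    exact ⟨h', (List.prefix_append _ _).trans ((List.prefix_append _ _).trans hpre), hrest⟩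

lemma sLegal.exists_sEnded_extension (hleg : sLegal G p σ) (hv : sValid G p h)
    (hf : sFollows p σ h) :
    ∃ h', h <+: h' ∧ sValid G p h' ∧ sFollows p σ h' ∧ sEnded G p h' := by
  by_cases hm : mover p h.length = p
  · exact hleg.exists_sEnded_extension_of_mover_self _ h (Nat.lt_succ_self _) hm hv hf
  by_cases hne : sEnded G p h
  · exact ⟨h, List.prefix_refl h, hv, hf, hne⟩
  have hm' : mover p h.length = p.other := mover_eq_other_of_ne hm
  obtain ⟨h', hpre, hrest⟩ := hleg.exists_sEnded_extension_of_mover_self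
    ((G.V \ (allPicks h).toFinset).card + 1) (h ++ [none]) (by simp [allPicks_snoc])
    (by simp [hm']) (hv.snoc_none hm' hne) (hf.snoc_of_mover_other hm' none)
  exact ⟨h', (List.prefix_append _ _).trans hpre, hrest⟩

end Moves

def Ensures (G : Game) (p : Player) (σ : SHist → ℕ) (n : ℕ) : Prop :=
  sLegal G p σ ∧ ∀ h, sValid G p h → sFollows p σ h → sEnded G p h →
    fills (G.edges p) (spicked p p h) ∧ passCount p h ≤ n

section Ensures

variable {G : Game} {p : Player} {σ : SHist → ℕ} {n : ℕ} {h : SHist}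

lemma Ensures.passCount_le (hσ : Ensures G p σ n) (hv : sValid G p h) (hf : sFollows p σ h) :
    passCount p h ≤ n := by
  obtain ⟨h', hpre, hv', hf', hend'⟩ := hσ.1.exists_sEnded_extension hv hf
  exact (passCount_mono p hpre).trans (hσ.2 h' hv' hf' hend').2

/-- The opponent may still pass once more. -/
lemma Ensures.passCount_lt (hσ : Ensures G p σ n) (hv : sValid G p h) (hf : sFollows p σ h)
    (hne : ¬ sEnded G p h) (hm : mover p h.length = p.other) : passCount p h < n := by
  have := hσ.passCount_le (hv.snoc_none hm hne) (hf.snoc_of_mover_other hm none)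
  rw [passCount_snoc_none hm] at this
  omega

end Ensures

/-! ### From a winning strategy to a finite score -/

section Ghost

variable {G : Game} {p : Player} {σ : Strategy}

noncomputable def freshVertex (G : Game) (v : List ℕ) : ℕ :=
  if h : (G.V \ v.toFinset).Nonempty then h.choose else 0

lemma freshVertex_mem {v : List ℕ} (h : (G.V \ v.toFinset).Nonempty) :
    freshVertex G v ∈ G.V ∧ freshVertex G v ∉ v := by
  have := h.choose_spec
  rw [freshVertex, dif_pos h]
  simpa using this

/-- The move made in the replay of a play of `sc_p(G)` as a play of `G`: the opponent's
passes, and their picks of vertices already taken in the replay, become fresh picks. -/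
noncomputable def ghostMove (G : Game) (p : Player) (v : List ℕ) (a : Option ℕ) : ℕ :=
  if mover p v.length = p then a.getD 0
  else match a with
    | some x => if x ∈ v then freshVertex G v else x
    | none => freshVertex G v

noncomputable def ghost (G : Game) (p : Player) (hs : SHist) : List ℕ :=
  hs.foldl (fun v a => v ++ [ghostMove G p v a]) []

@[simp] lemma ghost_nil : ghost G p [] = [] := rfl

lemma ghost_snoc (hs : SHist) (a : Option ℕ) :
    ghost G p (hs ++ [a]) = ghost G p hs ++ [ghostMove G p (ghost G p hs) a] := by
  simp [ghost]

lemma ValidHist.length_le {s : Player} {v : List ℕ} (hv : ValidHist G s v) :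
    v.length ≤ G.V.card := by
  rw [← List.toFinset_card_of_nodup hv.1]
  exact Finset.card_le_card fun y hy => hv.2.1 y (List.mem_toFinset.mp hy)

lemma ValidHist.toFinset_eq_of_length {s : Player} {v : List ℕ} (hv : ValidHist G s v)
    (hlen : v.length = G.V.card) : v.toFinset = G.V :=
  Finset.eq_of_subset_of_card_le (fun y hy => hv.2.1 y (List.mem_toFinset.mp hy))
    (by rw [List.toFinset_card_of_nodup hv.1, hlen])

structure GhostInv (G : Game) (p : Player) (σ : Strategy) (hs : SHist) (v : List ℕ) :
    Prop where
  length_eq : v.length = hs.length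
  valid : ValidHist G p v
  follows : Follows p p σ v
  picked_self : spicked p p hs = picked p p v
  picked_other : spicked p p.other hs ⊆ picked p p.other v

lemma GhostInv.allPicks_subset {hs : SHist} {v : List ℕ} (hg : GhostInv G p σ hs v) :
    (allPicks hs).toFinset ⊆ v.toFinset := by
  rw [allPicks_toFinset_eq p, toFinset_eq_picked_union p]
  have := hg.picked_other
  cases p
  · exact Finset.union_subset_union hg.picked_self.subset this
  · exact Finset.union_subset_union this hg.picked_self.subset

lemma ValidHist.sdiff_nonempty {s : Player} {v : List ℕ} (hv : ValidHist G s v)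
    (hlt : v.length < G.V.card) : (G.V \ v.toFinset).Nonempty := by
  rw [← Finset.card_pos, Finset.card_sdiff_of_subset
    (fun y hy => hv.2.1 y (List.mem_toFinset.mp hy)), List.toFinset_card_of_nodup hv.1]
  omega

lemma GhostInv.ghostMove_of_mover_other {hs : SHist} {v : List ℕ} (hg : GhostInv G p σ hs v)
    (hm : mover p hs.length = p.other) (hfresh : (G.V \ v.toFinset).Nonempty) {a : Option ℕ}
    (ha : ∀ x, a = some x → x ∈ G.V ∧ x ∉ allPicks hs) :
    ghostMove G p v a ∈ G.V ∧ ghostMove G p v a ∉ v ∧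
      ∀ x, a = some x → x ∈ insert (ghostMove G p v a) (picked p p.other v) := by
  have hmv : mover p v.length ≠ p := by rw [hg.length_eq, hm]; exact p.other_ne
  cases a with
  | none => simpa [ghostMove, hmv] using freshVertex_mem hfresh
  | some x =>
    by_cases hxv : x ∈ v
    · have hxo : x ∈ picked p p.other v := by
        have hxp : x ∉ picked p p v := fun hx => (ha x rfl).2
          (List.mem_toFinset.mp (spicked_subset p p hs (hg.picked_self ▸ hx)))
        have := List.mem_toFinset.mpr hxv
        rw [toFinset_eq_picked_union p] at this
        cases p <;> simp_all [Player.other]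
      simpa [ghostMove, hmv, hxv, hxo] using freshVertex_mem hfresh
    · simpa [ghostMove, hmv, hxv] using (ha x rfl).1

lemma GhostInv.snoc (hleg : Legal G p p σ)
    (hwin : ∀ v, ValidHist G p v → Follows p p σ v → Complete G p v →
      fills (G.edges p) (picked p p v)) {hs : SHist} {a : Option ℕ} (hv : sValid G p (hs ++ [a]))
    (hf : sFollows p (fun t => σ (ghost G p t)) (hs ++ [a]))
    (hg : GhostInv G p σ hs (ghost G p hs)) :
    GhostInv G p σ (hs ++ [a]) (ghost G p (hs ++ [a])) := by
  obtain ⟨-, -, hne, ha⟩ := sValid_snoc.mp hv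
  set v := ghost G p hs
  have hnc : ¬ Complete G p v := fun hc =>
    hne (.inl (hg.picked_self ▸ hwin v hg.valid hg.follows hc))
  have hvlt : v.length < G.V.card := lt_of_le_of_ne hg.valid.length_le fun h => hnc (.inr h)
  have hmv : mover p v.length = mover p hs.length := by rw [hg.length_eq]
  rw [ghost_snoc]
  by_cases hm : mover p hs.length = p
  · obtain ⟨hσV, hσv⟩ := hleg v hg.valid hg.follows (fun h => hnc (.inl h)) hvlt (hmv.trans hm)
    have ha : a = some (σ v) := (sFollows_snoc.mp hf).2 hm
    have hmove : ghostMove G p v a = σ v := by simp [ghostMove, hmv, hm, ha]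
    rw [hmove, ha]
    refine ⟨by simpa using hg.length_eq,
      validHist_snoc.mpr ⟨hg.valid, hσv, hσV, fun h => hnc (.inl h)⟩,
      follows_snoc.mpr ⟨hg.follows, fun _ => rfl⟩, ?_, ?_⟩
    · rw [spicked_snoc_some _ hm, picked_snoc, if_pos (hmv.trans hm), hg.picked_self]
    · rw [spicked_snoc_of_ne _ (by rw [hm]; exact p.ne_other), picked_snoc,
        if_neg (by rw [hmv, hm]; exact p.ne_other)]
      exact hg.picked_other
  · have hm' : mover p hs.length = p.other := mover_eq_other_of_ne hm
    obtain ⟨hzV, hzv, hza⟩ :=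
      hg.ghostMove_of_mover_other hm' (hg.valid.sdiff_nonempty hvlt) ha
    refine ⟨by simpa using hg.length_eq,
      validHist_snoc.mpr ⟨hg.valid, hzv, hzV, fun h => hnc (.inl h)⟩,
      follows_snoc.mpr ⟨hg.follows, fun h => absurd (hmv.symm.trans h) hm⟩, ?_, ?_⟩
    · rw [spicked_snoc_of_ne _ (by rw [hm']; exact p.other_ne), picked_snoc,
        if_neg (by rw [hmv, hm']; exact p.other_ne), hg.picked_self]
    · rw [spicked_snoc, if_pos hm', picked_snoc, if_pos (hmv.trans hm')]
      exact Finset.union_subset (fun x hx => hza x (by simpa using hx))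
        (hg.picked_other.trans (Finset.subset_insert _ _))

lemma ghostInv (hleg : Legal G p p σ)
    (hwin : ∀ v, ValidHist G p v → Follows p p σ v → Complete G p v →
      fills (G.edges p) (picked p p v)) (hs : SHist) (hv : sValid G p hs)
    (hf : sFollows p (fun t => σ (ghost G p t)) hs) : GhostInv G p σ hs (ghost G p hs) := by
  induction hs using List.reverseRecOn with
  | nil => exact ⟨rfl, ⟨List.nodup_nil, by simp, by simp⟩, by simp [Follows], by simp, by simp⟩
  | append_singleton hs a ih =>
    exact GhostInv.snoc hleg hwin hv hf (ih (sValid_snoc.mp hv).1 (sFollows_snoc.mp hf).1)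

end Ghost

lemma canEnsure_of_winsAs {G : Game} {p : Player} (hwin : WinsAs G p p) :
    canEnsure G p G.V.card := by
  obtain ⟨σ, hleg, hwin⟩ := hwin
  have hfills : ∀ hs, sValid G p hs → sFollows p (fun t => σ (ghost G p t)) hs →
      Complete G p (ghost G p hs) → fills (G.edges p) (spicked p p hs) := fun hs hv hf hc =>
    have hg := ghostInv hleg hwin hs hv hf
    hg.picked_self ▸ hwin _ hg.valid hg.follows hc
  refine ⟨fun t => σ (ghost G p t), fun hs hv hf hne hm => ?_, fun hs hv hf hend => ?_⟩
  · have hg := ghostInv hleg hwin hs hv hf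
    have hnc : ¬ Complete G p (ghost G p hs) := fun hc => hne (.inl (hfills hs hv hf hc))
    obtain ⟨hV, hv'⟩ := hleg _ hg.valid hg.follows (fun h => hnc (.inl h))
      (lt_of_le_of_ne hg.valid.length_le fun h => hnc (.inr h)) (hg.length_eq ▸ hm)
    exact ⟨hV, fun h => hv' (List.mem_toFinset.mp (hg.allPicks_subset (List.mem_toFinset.mpr h)))⟩
  · have hg := ghostInv hleg hwin hs hv hf
    refine ⟨?_, (passCount_le_length p hs).trans (hg.length_eq ▸ hg.valid.length_le)⟩
    rcases hend with hfill | hfill | hfull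
    · exact hfill
    · exact hfills hs hv hf
        (.inl ((ended_iff_player G p p _).mpr (.inr (fills_mono le_rfl hg.picked_other hfill))))
    · refine hfills hs hv hf (.inr (le_antisymm hg.valid.length_le ?_))
      rw [← List.toFinset_card_of_nodup hg.valid.1]
      exact Finset.card_le_card (hfull.trans hg.allPicks_subset)

/-! ### Ensuring a score from a given position -/

def FollowsFrom (q : Player) (σ : SHist → ℕ) (h₀ h : SHist) : Prop :=
  ∀ k, h₀.length ≤ k → k < h.length → mover q k = q → h.getD k none = some (σ (h.take k))

-- The bound is strict, unlike in `Ensures`.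
def EnsuresFrom (G : Game) (q : Player) (m : ℕ) (h₀ : SHist) (σ : SHist → ℕ) : Prop :=
  (∀ h, h₀ <+: h → sValid G q h → FollowsFrom q σ h₀ h → ¬ sEnded G q h →
      mover q h.length = q → σ h ∈ G.V ∧ σ h ∉ allPicks h) ∧
    (∀ h, h₀ <+: h → sValid G q h → FollowsFrom q σ h₀ h → sEnded G q h →
      fills (G.edges q) (spicked q q h) ∧ passCount q h < m)

def CanEnsureFrom (G : Game) (q : Player) (m : ℕ) (h₀ : SHist) : Prop :=
  ∃ σ, EnsuresFrom G q m h₀ σ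

lemma followsFrom_nil {q : Player} {σ : SHist → ℕ} {h : SHist} :
    FollowsFrom q σ [] h ↔ sFollows q σ h := by
  simp [FollowsFrom, sFollows]

lemma eq_or_snoc_getD_prefix {α : Type*} {h₀ h : List α} (hpre : h₀ <+: h) (d : α) :
    h = h₀ ∨ h₀ ++ [h.getD h₀.length d] <+: h := by
  obtain ⟨t, rfl⟩ := hpre
  cases t with
  | nil => simp
  | cons a t => exact .inr ⟨t, by simp⟩

lemma EnsuresFrom.ensures_pred {G : Game} {q : Player} {m : ℕ} {σ : SHist → ℕ}
    (hσ : EnsuresFrom G q m [] σ) : 0 < m ∧ Ensures G q σ (m - 1) := by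
  have hleg : sLegal G q σ := fun h hv hf =>
    hσ.1 h List.nil_prefix hv (followsFrom_nil.mpr hf)
  have hguar : ∀ h, sValid G q h → sFollows q σ h → sEnded G q h →
      fills (G.edges q) (spicked q q h) ∧ passCount q h < m := fun h hv hf =>
    hσ.2 h List.nil_prefix hv (followsFrom_nil.mpr hf)
  obtain ⟨h, -, hv, hf, hend⟩ := hleg.exists_sEnded_extension sValid_nil sFollows_nil
  exact ⟨(Nat.zero_le _).trans_lt (hguar h hv hf hend).2, hleg, fun h hv hf hend =>
    (hguar h hv hf hend).imp_right Nat.le_sub_one_of_lt⟩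

lemma not_canEnsureFrom_delay (G : Game) (q : Player) : ¬ CanEnsureFrom G q (delay G q) [] := by
  rintro ⟨σ, hσ⟩
  obtain ⟨hpos, hσ'⟩ := hσ.ensures_pred
  have : delay G q ≤ delay G q - 1 := Nat.sInf_le ⟨σ, hσ'⟩
  omega

section CanEnsureFrom

variable {G : Game} {q : Player} {m : ℕ} {h₀ : SHist}

lemma exists_not_canEnsureFrom_snoc (hm : mover q h₀.length = q.other)
    (hne : ¬ sEnded G q h₀) (hn : ¬ CanEnsureFrom G q m h₀) :
    ∃ a : Option ℕ, (∀ x, a = some x → x ∈ G.V ∧ x ∉ allPicks h₀) ∧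
      ¬ CanEnsureFrom G q m (h₀ ++ [a]) := by
  by_contra! hall
  apply hn
  have hstrat : ∀ a : Option ℕ, ∃ σa, (∀ x, a = some x → x ∈ G.V ∧ x ∉ allPicks h₀) →
      EnsuresFrom G q m (h₀ ++ [a]) σa := by
    intro a
    by_cases ha : ∀ x, a = some x → x ∈ G.V ∧ x ∉ allPicks h₀
    · obtain ⟨σa, hσa⟩ := hall a ha
      exact ⟨σa, fun _ => hσa⟩
    · exact ⟨fun _ => 0, fun h => absurd h ha⟩
  choose σs hσs using hstrat
  have hcase : ∀ h, h₀ <+: h → sValid G q h →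
      FollowsFrom q (fun h => σs (h.getD h₀.length none) h) h₀ h →
      h = h₀ ∨ (h₀ ++ [h.getD h₀.length none] <+: h ∧
        FollowsFrom q (σs (h.getD h₀.length none)) (h₀ ++ [h.getD h₀.length none]) h) ∧
        ∀ x, h.getD h₀.length none = some x → x ∈ G.V ∧ x ∉ allPicks h₀ := by
    intro h hpre hv hf
    refine (eq_or_snoc_getD_prefix hpre none).imp_right fun hpre' => ⟨⟨hpre', ?_⟩,
      (sValid_snoc.mp (hv.prefix hpre')).2.2.2⟩
    intro k hk hkh hmk
    have hk' : h₀.length < k := by simpa using hk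
    rw [hf k hk'.le hkh hmk]
    simp only [List.getD_eq_getElem?_getD, List.getElem?_take_of_lt hk']
  refine ⟨fun h => σs (h.getD h₀.length none) h, fun h hpre hv hf hneh hmh => ?_,
    fun h hpre hv hf hend => ?_⟩
  · obtain rfl | ⟨hfa, ha⟩ := hcase h hpre hv hf
    · exact absurd (hm.symm.trans hmh) q.other_ne
    · exact (hσs _ ha).1 h hfa.1 hv hfa.2 hneh hmh
  · obtain rfl | ⟨hfa, ha⟩ := hcase h hpre hv hf
    · exact absurd hend hne
    · exact (hσs _ ha).2 h hfa.1 hv hfa.2 hend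

lemma not_canEnsureFrom_snoc_some (hm : mover q h₀.length = q) (hne : ¬ sEnded G q h₀)
    {x : ℕ} (hxV : x ∈ G.V) (hxh : x ∉ allPicks h₀) (hn : ¬ CanEnsureFrom G q m h₀) :
    ¬ CanEnsureFrom G q m (h₀ ++ [some x]) := by
  rintro ⟨σ, hleg, hguar⟩
  apply hn
  set σ' : SHist → ℕ := fun h => if h.length = h₀.length then x else σ h
  have hcase : ∀ h, h₀ <+: h → FollowsFrom q σ' h₀ h →
      h = h₀ ∨ h₀ ++ [some x] <+: h ∧ FollowsFrom q σ (h₀ ++ [some x]) h := by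
    intro h hpre hf
    refine (eq_or_snoc_getD_prefix hpre none).imp_right fun hpre' => ⟨?_, ?_⟩
    · have hget : h.getD h₀.length none = some x := by
        rw [hf _ le_rfl (by simpa using hpre'.length_le) hm]
        simp [σ', Nat.min_eq_left hpre.length_le]
      rwa [hget] at hpre'
    · intro k hk hkh hmk
      have hk' : h₀.length < k := by simpa using hk
      rw [hf k hk'.le hkh hmk]
      simp [σ', hk'.ne', Nat.min_eq_left hkh.le]
  refine ⟨σ', fun h hpre hv hf hneh hmh => ?_, fun h hpre hv hf hend => ?_⟩
  · obtain rfl | ⟨hpre', hf'⟩ := hcase h hpre hf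
    · simpa [σ'] using ⟨hxV, hxh⟩
    · have hlen : h.length ≠ h₀.length := by have := hpre'.length_le; simp at this; omega
      simpa [σ', hlen] using hleg h hpre' hv hf' hneh hmh
  · obtain rfl | ⟨hpre', hf'⟩ := hcase h hpre hf
    · exact absurd hend hne
    · exact hguar h hpre' hv hf' hend

lemma canEnsureFrom_of_fills (hm : mover q h₀.length = q) (hne : ¬ sEnded G q h₀)
    {x : ℕ} (hxV : x ∈ G.V) (hxh : x ∉ allPicks h₀)
    (hfill : fills (G.edges q) (spicked q q (h₀ ++ [some x])))
    (hcount : passCount q (h₀ ++ [some x]) < m) : CanEnsureFrom G q m h₀ := by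
  have hcase : ∀ h, h₀ <+: h → sValid G q h → FollowsFrom q (fun _ => x) h₀ h →
      h = h₀ ∨ h = h₀ ++ [some x] := by
    intro h hpre hv hf
    refine (eq_or_snoc_getD_prefix hpre none).imp_right fun hpre' => ?_
    have hget : h.getD h₀.length none = some x :=
      hf _ le_rfl (by simpa using hpre'.length_le) hm
    rw [hget] at hpre'
    by_contra hne'
    have hlt : (h₀ ++ [some x]).length < h.length :=
      lt_of_le_of_ne hpre'.length_le fun h => hne' (hpre'.eq_of_length_le h.ge).symm
    apply hv.2.2.2 _ hlt
    rw [← List.prefix_iff_eq_take.mp hpre']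
    exact .inl hfill
  refine ⟨fun _ => x, fun h hpre hv hf hneh _ => ?_, fun h hpre hv hf hend => ?_⟩
  · obtain rfl | rfl := hcase h hpre hv hf
    · exact ⟨hxV, hxh⟩
    · exact absurd (.inl hfill) hneh
  · obtain rfl | rfl := hcase h hpre hv hf
    · exact absurd hend hne
    · exact ⟨hfill, hcount⟩

end CanEnsureFrom

/-! ### Simulated plays -/

def Tracks (s : Player) (U : Finset ℕ) (h : List ℕ) (p : Player) (hs : SHist) : Prop :=
  ∀ r, spicked p r hs = picked s r h ∩ U

namespace Tracks

variable {s p : Player} {U : Finset ℕ} {h : List ℕ} {hs : SHist}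

lemma nil : Tracks s U [] p [] := fun r => by simp

lemma snoc_some (ht : Tracks s U h p hs) {x : ℕ} (hx : x ∈ U)
    (hm : mover p hs.length = mover s h.length) : Tracks s U (h ++ [x]) p (hs ++ [some x]) := by
  intro r
  rw [spicked_snoc, picked_snoc, ht r, hm]
  split_ifs
  · rw [Finset.insert_inter_of_mem hx, Finset.insert_eq]; rfl
  · rfl

lemma snoc_of_not_mem (ht : Tracks s U h p hs) {x : ℕ} (hx : x ∉ U) :
    Tracks s U (h ++ [x]) p hs := by
  intro r
  rw [ht r, picked_snoc]
  split_ifs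
  · rw [Finset.insert_inter_of_notMem hx]
  · rfl

lemma snoc_none (ht : Tracks s U h p hs) : Tracks s U h p (hs ++ [none]) := by
  intro r
  rw [spicked_snoc_none, ht r]

lemma allPicks_toFinset (ht : Tracks s U h p hs) :
    (allPicks hs).toFinset = h.toFinset ∩ U := by
  rw [allPicks_toFinset_eq p, toFinset_eq_picked_union s, Finset.union_inter_distrib_right,
    ht .L, ht .R]

lemma not_mem_allPicks (ht : Tracks s U h p hs) {x : ℕ} (hx : x ∉ h) : x ∉ allPicks hs := by
  rw [← List.mem_toFinset, ht.allPicks_toFinset]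
  simp [hx]

lemma not_mem_of_not_mem_allPicks (ht : Tracks s U h p hs) {x : ℕ} (hxU : x ∈ U)
    (hx : x ∉ allPicks hs) : x ∉ h := by
  rw [← List.mem_toFinset, ht.allPicks_toFinset] at hx
  simpa [hxU] using hx

lemma fills (ht : Tracks s U h p hs) {E E' : Finset (Finset ℕ)} (hE : E ⊆ E') {r : Player}
    (hfill : APG.fills E (spicked p r hs)) : APG.fills E' (picked s r h) :=
  fills_mono hE (by rw [ht r]; exact Finset.inter_subset_left) hfill

end Tracks

section Union

variable (A B : Game) (p : Player) (σ : SHist → ℕ) (τ : SHist → Option ℕ)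

open scoped Classical in
/-- How the move `x`, made at index `i` of a play of `A ∪ B` where `p` moves first, extends
the simulated plays of `sc_p(A)` and of `sc_{p.other}(B)`. An opponent move in `B` left
unanswered there by `τ` counts as an opponent pass in `sc_p(A)`. -/
noncomputable def decodeStep (st : SHist × SHist) (i x : ℕ) : SHist × SHist :=
  if i % 2 = 0 then
    if st.1.length % 2 = 0 then (st.1 ++ [some x], st.2)
    else if sEnded B p.other st.2 then (st.1 ++ [none, some x], st.2)
    else match τ st.2 with
      | some _ => (st.1, st.2 ++ [some x])
      | none => (st.1 ++ [none, some x], st.2 ++ [none])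
  else if x ∈ A.V then (st.1 ++ [some x], st.2) else (st.1, st.2 ++ [some x])

noncomputable def decode (h : List ℕ) : SHist × SHist :=
  h.zipIdx.foldl (fun st xi => decodeStep A B p τ st xi.2 xi.1) ([], [])

open scoped Classical in
noncomputable def unionStrategy : Strategy := fun h =>
  let st := decode A B p τ h
  if st.1.length % 2 = 0 then σ st.1
  else if sEnded B p.other st.2 then σ (st.1 ++ [none])
  else (τ st.2).getD (σ (st.1 ++ [none]))

@[simp] lemma decode_nil : decode A B p τ [] = ([], []) := rfl

lemma decode_snoc (h : List ℕ) (x : ℕ) :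
    decode A B p τ (h ++ [x]) = decodeStep A B p τ (decode A B p τ h) h.length x := by
  simp [decode, List.zipIdx_append]

variable (m : ℕ)

structure SimA (h : List ℕ) (qs : SHist) : Prop where
  valid : sValid A p qs
  follows : sFollows p σ qs
  tracks : Tracks p A.V h p qs

structure SimB (h : List ℕ) (ps : SHist) : Prop where
  valid : sValid B p.other ps
  tracks : Tracks p B.V h p.other ps
  not_canEnsureFrom : ¬ CanEnsureFrom B p.other m ps

structure UnionInv (h : List ℕ) (qs ps : SHist) : Prop where
  simA : SimA A p σ h qs
  simB : SimB B p m h ps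
  passCount_le : passCount p.other ps ≤ passCount p qs
  -- odd `qs`: the opponent is to move in `A`; odd `ps`: `p` is to answer in `B`
  parity_odd : h.length % 2 = 1 →
    qs.length % 2 = 1 ∧ (ps.length % 2 = 0 ∨ sEnded B p.other ps)
  parity_even : h.length % 2 = 0 →
    (qs.length % 2 = 0 ∧ (ps.length % 2 = 0 ∨ sEnded B p.other ps)) ∨
      (qs.length % 2 = 1 ∧ ps.length % 2 = 1)
  sEnded_of_fills : fills (B.edges p.other) (spicked p.other p.other ps) → sEnded A p qs

end Union

def Spoils (B : Game) (q : Player) (m : ℕ) (τ : SHist → Option ℕ) : Prop :=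
  ∀ ps, mover q ps.length = q.other → ¬ sEnded B q ps → ¬ CanEnsureFrom B q m ps →
    (∀ y, τ ps = some y → y ∈ B.V ∧ y ∉ allPicks ps) ∧ ¬ CanEnsureFrom B q m (ps ++ [τ ps])

lemma exists_spoils (B : Game) (q : Player) (m : ℕ) : ∃ τ, Spoils B q m τ := by
  have : ∀ ps : SHist, ∃ a : Option ℕ, mover q ps.length = q.other → ¬ sEnded B q ps →
      ¬ CanEnsureFrom B q m ps →
      (∀ y, a = some y → y ∈ B.V ∧ y ∉ allPicks ps) ∧ ¬ CanEnsureFrom B q m (ps ++ [a]) := by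
    intro ps
    by_cases hc : mover q ps.length = q.other ∧ ¬ sEnded B q ps ∧ ¬ CanEnsureFrom B q m ps
    · obtain ⟨a, ha⟩ := exists_not_canEnsureFrom_snoc hc.1 hc.2.1 hc.2.2
      exact ⟨a, fun _ _ _ => ha⟩
    · exact ⟨none, fun h1 h2 h3 => absurd ⟨h1, h2, h3⟩ hc⟩
  choose τ hτ using this
  exact ⟨τ, hτ⟩

section Sim

variable {A B : Game} {p : Player} {σ : SHist → ℕ} {m : ℕ} {h : List ℕ} {qs ps : SHist}

namespace SimA

lemma snoc_none (hs : SimA A p σ h qs) (hm : mover p qs.length = p.other)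
    (hne : ¬ sEnded A p qs) : SimA A p σ h (qs ++ [none]) :=
  ⟨hs.valid.snoc_none hm hne, hs.follows.snoc_of_mover_other hm none, hs.tracks.snoc_none⟩

lemma snoc_self (hs : SimA A p σ h qs) (hσ : sLegal A p σ) (hne : ¬ sEnded A p qs)
    (hmq : mover p qs.length = p) (hmh : mover p h.length = p) :
    σ qs ∈ A.V ∧ σ qs ∉ h ∧ SimA A p σ (h ++ [σ qs]) (qs ++ [some (σ qs)]) := by
  obtain ⟨hV, hq⟩ := hσ qs hs.valid hs.follows hne hmq
  exact ⟨hV, hs.tracks.not_mem_of_not_mem_allPicks hV hq,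
    ⟨hs.valid.snoc_some hne hV hq, hs.follows.snoc_self,
      hs.tracks.snoc_some hV (hmq.trans hmh.symm)⟩⟩

lemma snoc_other (hs : SimA A p σ h qs) (hne : ¬ sEnded A p qs) {x : ℕ} (hx : x ∈ A.V)
    (hxh : x ∉ h) (hmq : mover p qs.length = p.other) (hmh : mover p h.length = p.other) :
    SimA A p σ (h ++ [x]) (qs ++ [some x]) :=
  ⟨hs.valid.snoc_some hne hx (hs.tracks.not_mem_allPicks hxh),
    hs.follows.snoc_of_mover_other hmq _, hs.tracks.snoc_some hx (hmq.trans hmh.symm)⟩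

lemma snoc_of_not_mem (hs : SimA A p σ h qs) {x : ℕ} (hx : x ∉ A.V) :
    SimA A p σ (h ++ [x]) qs :=
  ⟨hs.valid, hs.follows, hs.tracks.snoc_of_not_mem hx⟩

end SimA

namespace SimB

lemma snoc_of_not_mem (hs : SimB B p m h ps) {x : ℕ} (hx : x ∉ B.V) :
    SimB B p m (h ++ [x]) ps :=
  ⟨hs.valid, hs.tracks.snoc_of_not_mem hx, hs.not_canEnsureFrom⟩

lemma snoc_other (hs : SimB B p m h ps) (hne : ¬ sEnded B p.other ps) {x : ℕ} (hx : x ∈ B.V)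
    (hxh : x ∉ h) (hmq : mover p.other ps.length = p.other)
    (hmh : mover p h.length = p.other) : SimB B p m (h ++ [x]) (ps ++ [some x]) :=
  have hxp := hs.tracks.not_mem_allPicks hxh
  ⟨hs.valid.snoc_some hne hx hxp, hs.tracks.snoc_some hx (hmq.trans hmh.symm),
    not_canEnsureFrom_snoc_some hmq hne hx hxp hs.not_canEnsureFrom⟩

lemma snoc_reply_some (hs : SimB B p m h ps) {τ : SHist → Option ℕ}
    (hτ : Spoils B p.other m τ) (hne : ¬ sEnded B p.other ps)
    (hmq : mover p.other ps.length = p) (hmh : mover p h.length = p) {w : ℕ}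
    (hw : τ ps = some w) : w ∈ B.V ∧ w ∉ h ∧ SimB B p m (h ++ [w]) (ps ++ [some w]) := by
  obtain ⟨hleg, hn⟩ := hτ ps (by rwa [p.other_other]) hne hs.not_canEnsureFrom
  obtain ⟨hV, hp⟩ := hleg w hw
  exact ⟨hV, hs.tracks.not_mem_of_not_mem_allPicks hV hp, hs.valid.snoc_some hne hV hp,
    hs.tracks.snoc_some hV (hmq.trans hmh.symm), hw ▸ hn⟩

lemma snoc_reply_none (hs : SimB B p m h ps) {τ : SHist → Option ℕ}
    (hτ : Spoils B p.other m τ) (hne : ¬ sEnded B p.other ps)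
    (hmq : mover p.other ps.length = p) (hn : τ ps = none) : SimB B p m h (ps ++ [none]) :=
  ⟨hs.valid.snoc_none (by rwa [p.other_other]) hne, hs.tracks.snoc_none,
    hn ▸ (hτ ps (by rwa [p.other_other]) hne hs.not_canEnsureFrom).2⟩

end SimB

end Sim

namespace UnionInv

variable {A B : Game} {p : Player} {σ : SHist → ℕ} {τ : SHist → Option ℕ} {m d : ℕ}
  {h : List ℕ} {qs ps : SHist}

lemma fills_of_sEnded_A (hinv : UnionInv A B p σ m h qs ps) (hσ : Ensures A p σ d)
    (hend : sEnded A p qs) : fills ((gunion A B).edges p) (picked p p h) :=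
  hinv.simA.tracks.fills (by rw [gunion_edges]; exact Finset.subset_union_left)
    (hσ.2 qs hinv.simA.valid hinv.simA.follows hend).1

lemma not_sEnded_A (hinv : UnionInv A B p σ m h qs ps) (hσ : Ensures A p σ d)
    (hne : ¬ ended (gunion A B) p h) : ¬ sEnded A p qs := fun hend =>
  hne ((ended_iff_player _ p p h).mpr (.inl (hinv.fills_of_sEnded_A hσ hend)))

lemma not_fills_B (hinv : UnionInv A B p σ m h qs ps) (hne : ¬ ended (gunion A B) p h)
    (r : Player) : ¬ fills (B.edges r) (spicked p.other r ps) := fun hfill =>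
  hne ((ended_iff_player _ p r h).mpr (.inl (hinv.simB.tracks.fills
    (by rw [gunion_edges]; exact Finset.subset_union_right) hfill)))

lemma not_sEnded_B_of_mem (hinv : UnionInv A B p σ m h qs ps)
    (hne : ¬ ended (gunion A B) p h) {x : ℕ} (hx : x ∈ B.V) (hxh : x ∉ h) :
    ¬ sEnded B p.other ps := by
  rintro (hfill | hfill | hfull)
  · exact hinv.not_fills_B hne _ hfill
  · exact hinv.not_fills_B hne _ hfill
  · exact hinv.simB.tracks.not_mem_allPicks hxh (List.mem_toFinset.mp (hfull hx))

lemma snoc_self_A (hinv : UnionInv A B p σ m h qs ps) (hdec : decode A B p τ h = (qs, ps))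
    (hσ : Ensures A p σ d) (hdisj : Disjoint A.V B.V) (hne : ¬ ended (gunion A B) p h)
    (hpar : h.length % 2 = 0) (hq : qs.length % 2 = 0)
    (hps : ps.length % 2 = 0 ∨ sEnded B p.other ps) :
    σ qs ∈ A.V ∧ σ qs ∉ h ∧ UnionInv A B p σ m (h ++ [σ qs])
      (decode A B p τ (h ++ [σ qs])).1 (decode A B p τ (h ++ [σ qs])).2 := by
  obtain ⟨hV, hxh, hsA⟩ := hinv.simA.snoc_self hσ.1 (hinv.not_sEnded_A hσ hne)
    (mover_of_even p hq) (mover_of_even p hpar)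
  have hd : decode A B p τ (h ++ [σ qs]) = (qs ++ [some (σ qs)], ps) := by
    rw [decode_snoc, hdec]; simp [decodeStep, hpar, hq]
  rw [hd]
  exact ⟨hV, hxh, hsA, hinv.simB.snoc_of_not_mem (Finset.disjoint_left.mp hdisj hV),
    by simpa using hinv.passCount_le, fun _ => ⟨by simp; omega, hps⟩,
    fun h => by simp at h; omega, fun hfill => absurd hfill (hinv.not_fills_B hne _)⟩

lemma snoc_self_B_ended (hinv : UnionInv A B p σ m h qs ps)
    (hdec : decode A B p τ h = (qs, ps)) (hσ : Ensures A p σ d) (hdisj : Disjoint A.V B.V)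
    (hne : ¬ ended (gunion A B) p h) (hpar : h.length % 2 = 0) (hq : qs.length % 2 = 1)
    (hB : sEnded B p.other ps) :
    σ (qs ++ [none]) ∈ A.V ∧ σ (qs ++ [none]) ∉ h ∧ UnionInv A B p σ m (h ++ [σ (qs ++ [none])])
      (decode A B p τ (h ++ [σ (qs ++ [none])])).1
      (decode A B p τ (h ++ [σ (qs ++ [none])])).2 := by
  have nqA := hinv.not_sEnded_A hσ hne
  obtain ⟨hV, hxh, hsA⟩ := (hinv.simA.snoc_none (mover_of_odd p hq) nqA).snoc_self hσ.1
    (by simpa using nqA) (mover_of_even p (by simp; omega)) (mover_of_even p hpar)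
  have hd : decode A B p τ (h ++ [σ (qs ++ [none])]) =
      (qs ++ [none] ++ [some (σ (qs ++ [none]))], ps) := by
    rw [decode_snoc, hdec]; simp [decodeStep, hpar, hq, hB]
  rw [hd]
  refine ⟨hV, hxh, hsA, hinv.simB.snoc_of_not_mem (Finset.disjoint_left.mp hdisj hV), ?_,
    fun _ => ⟨by simp; omega, .inr hB⟩, fun h => by simp at h; omega,
    fun hfill => absurd hfill (hinv.not_fills_B hne _)⟩
  rw [passCount_snoc_some, passCount_snoc_none (mover_of_odd p hq)]
  exact hinv.passCount_le.trans (Nat.le_succ _)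

lemma snoc_reply (hinv : UnionInv A B p σ m h qs ps) (hdec : decode A B p τ h = (qs, ps))
    (hτ : Spoils B p.other m τ) (hdisj : Disjoint A.V B.V) (hne : ¬ ended (gunion A B) p h)
    (hpar : h.length % 2 = 0) (hq : qs.length % 2 = 1) (hp : ps.length % 2 = 1)
    (hB : ¬ sEnded B p.other ps) {w : ℕ} (hw : τ ps = some w) :
    w ∈ B.V ∧ w ∉ h ∧ UnionInv A B p σ m (h ++ [w])
      (decode A B p τ (h ++ [w])).1 (decode A B p τ (h ++ [w])).2 := by
  have hmq : mover p.other ps.length = p := by rw [mover_of_odd _ hp, p.other_other]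
  obtain ⟨hV, hxh, hsB⟩ := hinv.simB.snoc_reply_some hτ hB hmq (mover_of_even p hpar) hw
  have hd : decode A B p τ (h ++ [w]) = (qs, ps ++ [some w]) := by
    rw [decode_snoc, hdec]; simp [decodeStep, hpar, hq, hB, hw]
  rw [hd]
  refine ⟨hV, hxh, hinv.simA.snoc_of_not_mem (Finset.disjoint_right.mp hdisj hV), hsB,
    by simpa using hinv.passCount_le, fun _ => ⟨hq, .inl (by simp; omega)⟩,
    fun h => by simp at h; omega, fun hfill => ?_⟩
  rw [spicked_snoc_of_ne _ (by rw [hmq]; exact p.ne_other)] at hfill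
  exact absurd hfill (hinv.not_fills_B hne _)

lemma snoc_pass (hinv : UnionInv A B p σ m h qs ps) (hdec : decode A B p τ h = (qs, ps))
    (hσ : Ensures A p σ d) (hτ : Spoils B p.other m τ) (hdisj : Disjoint A.V B.V)
    (hne : ¬ ended (gunion A B) p h) (hpar : h.length % 2 = 0) (hq : qs.length % 2 = 1)
    (hp : ps.length % 2 = 1) (hB : ¬ sEnded B p.other ps) (hw : τ ps = none) :
    σ (qs ++ [none]) ∈ A.V ∧ σ (qs ++ [none]) ∉ h ∧ UnionInv A B p σ m (h ++ [σ (qs ++ [none])])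
      (decode A B p τ (h ++ [σ (qs ++ [none])])).1
      (decode A B p τ (h ++ [σ (qs ++ [none])])).2 := by
  have nqA := hinv.not_sEnded_A hσ hne
  have hmq : mover p.other ps.length = p := by rw [mover_of_odd _ hp, p.other_other]
  obtain ⟨hV, hxh, hsA⟩ := (hinv.simA.snoc_none (mover_of_odd p hq) nqA).snoc_self hσ.1
    (by simpa using nqA) (mover_of_even p (by simp; omega)) (mover_of_even p hpar)
  have hd : decode A B p τ (h ++ [σ (qs ++ [none])]) =
      (qs ++ [none] ++ [some (σ (qs ++ [none]))], ps ++ [none]) := by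
    rw [decode_snoc, hdec]; simp [decodeStep, hpar, hq, hB, hw]
  rw [hd]
  refine ⟨hV, hxh, hsA, (hinv.simB.snoc_reply_none hτ hB hmq hw).snoc_of_not_mem
    (Finset.disjoint_left.mp hdisj hV), ?_, fun _ => ⟨by simp; omega, .inl (by simp; omega)⟩,
    fun h => by simp at h; omega, fun hfill => ?_⟩
  · rw [passCount_snoc_some, passCount_snoc_none (mover_of_odd p hq),
      passCount_snoc_none (by rw [hmq, p.other_other])]
    exact Nat.succ_le_succ hinv.passCount_le
  · rw [spicked_snoc_none] at hfill
    exact absurd hfill (hinv.not_fills_B hne _)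

lemma snoc_self (hinv : UnionInv A B p σ m h qs ps) (hdec : decode A B p τ h = (qs, ps))
    (hσ : Ensures A p σ d) (hτ : Spoils B p.other m τ) (hdisj : Disjoint A.V B.V)
    (hne : ¬ ended (gunion A B) p h) (hpar : h.length % 2 = 0) :
    unionStrategy A B p σ τ h ∈ (gunion A B).V ∧ unionStrategy A B p σ τ h ∉ h ∧
      UnionInv A B p σ m (h ++ [unionStrategy A B p σ τ h])
        (decode A B p τ (h ++ [unionStrategy A B p σ τ h])).1
        (decode A B p τ (h ++ [unionStrategy A B p σ τ h])).2 := by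
  have hunion : ∀ {x}, x ∈ A.V ∨ x ∈ B.V → x ∈ (gunion A B).V := Finset.mem_union.mpr
  rcases hinv.parity_even hpar with ⟨hq, hps⟩ | ⟨hq, hp⟩
  · have hx : unionStrategy A B p σ τ h = σ qs := by simp [unionStrategy, hdec, hq]
    obtain ⟨hV, hrest⟩ := hinv.snoc_self_A hdec hσ hdisj hne hpar hq hps
    exact hx ▸ ⟨hunion (.inl hV), hrest⟩
  by_cases hB : sEnded B p.other ps
  · have hx : unionStrategy A B p σ τ h = σ (qs ++ [none]) := by
      simp [unionStrategy, hdec, hq, hB]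
    obtain ⟨hV, hrest⟩ := hinv.snoc_self_B_ended hdec hσ hdisj hne hpar hq hB
    exact hx ▸ ⟨hunion (.inl hV), hrest⟩
  cases hw : τ ps with
  | some w =>
    have hx : unionStrategy A B p σ τ h = w := by simp [unionStrategy, hdec, hq, hB, hw]
    obtain ⟨hV, hrest⟩ := hinv.snoc_reply hdec hτ hdisj hne hpar hq hp hB hw
    exact hx ▸ ⟨hunion (.inr hV), hrest⟩
  | none =>
    have hx : unionStrategy A B p σ τ h = σ (qs ++ [none]) := by
      simp [unionStrategy, hdec, hq, hB, hw]
    obtain ⟨hV, hrest⟩ := hinv.snoc_pass hdec hσ hτ hdisj hne hpar hq hp hB hw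
    exact hx ▸ ⟨hunion (.inl hV), hrest⟩

lemma snoc_other (hinv : UnionInv A B p σ m h qs ps) (hdec : decode A B p τ h = (qs, ps))
    (hσ : Ensures A p σ d) (hdm : d ≤ m) (hdisj : Disjoint A.V B.V)
    (hne : ¬ ended (gunion A B) p h) (hpar : h.length % 2 = 1) {x : ℕ}
    (hx : x ∈ (gunion A B).V) (hxh : x ∉ h) :
    UnionInv A B p σ m (h ++ [x]) (decode A B p τ (h ++ [x])).1
      (decode A B p τ (h ++ [x])).2 := by
  obtain ⟨hq, hps⟩ := hinv.parity_odd hpar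
  have hmh := mover_of_odd p hpar
  have nqA := hinv.not_sEnded_A hσ hne
  have hpar' : h.length % 2 ≠ 0 := by omega
  by_cases hxA : x ∈ A.V
  · have hd : decode A B p τ (h ++ [x]) = (qs ++ [some x], ps) := by
      rw [decode_snoc, hdec]; simp [decodeStep, hpar', hxA]
    rw [hd]
    exact ⟨hinv.simA.snoc_other nqA hxA hxh (mover_of_odd p hq) hmh,
      hinv.simB.snoc_of_not_mem (Finset.disjoint_left.mp hdisj hxA),
      by simpa using hinv.passCount_le, fun h => by simp at h; omega,
      fun _ => .inl ⟨by simp; omega, hps⟩, fun hfill => absurd hfill (hinv.not_fills_B hne _)⟩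
  have hxB : x ∈ B.V := (Finset.mem_union.mp hx).resolve_left hxA
  have nqB := hinv.not_sEnded_B_of_mem hne hxB hxh
  have hp : ps.length % 2 = 0 := hps.resolve_right nqB
  have hmq := mover_of_even p.other hp
  have hd : decode A B p τ (h ++ [x]) = (qs, ps ++ [some x]) := by
    rw [decode_snoc, hdec]; simp [decodeStep, hpar', hxA]
  rw [hd]
  refine ⟨hinv.simA.snoc_of_not_mem hxA, hinv.simB.snoc_other nqB hxB hxh hmq hmh,
    by simpa using hinv.passCount_le, fun h => by simp at h; omega,
    fun _ => .inr ⟨hq, by simp; omega⟩, fun hfill => ?_⟩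
  -- a fill of the opponent in `B` would need `m` passes, hence `d` passes in `A`, where `p`
  -- fills before the opponent passes `d` times
  have hlt := hσ.passCount_lt hinv.simA.valid hinv.simA.follows nqA (mover_of_odd p hq)
  have hge : m ≤ passCount p.other ps := by
    by_contra! hlt'
    exact hinv.simB.not_canEnsureFrom (canEnsureFrom_of_fills hmq nqB hxB
      (hinv.simB.tracks.not_mem_allPicks hxh) hfill (by simpa using hlt'))
  have := hinv.passCount_le
  omega

end UnionInv

namespace UnionInv

variable {A B : Game} {p : Player} {σ : SHist → ℕ} {τ : SHist → Option ℕ} {m d : ℕ}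

lemma nil (hWB : WellFormed B) (hB : ¬ CanEnsureFrom B p.other m []) :
    UnionInv A B p σ m [] [] [] :=
  ⟨⟨sValid_nil, sFollows_nil, Tracks.nil⟩, ⟨sValid_nil, Tracks.nil, hB⟩, le_rfl, by simp,
    fun _ => .inl ⟨rfl, .inl rfl⟩, fun hfill => absurd hfill (by simpa using hWB.not_fills_empty _)⟩

lemma of_follows (hWB : WellFormed B) (hB : ¬ CanEnsureFrom B p.other m [])
    (hσ : Ensures A p σ d) (hτ : Spoils B p.other m τ) (hdm : d ≤ m)
    (hdisj : Disjoint A.V B.V) (h : List ℕ) (hv : ValidHist (gunion A B) p h)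
    (hf : Follows p p (unionStrategy A B p σ τ) h) :
    UnionInv A B p σ m h (decode A B p τ h).1 (decode A B p τ h).2 := by
  induction h using List.reverseRecOn with
  | nil => exact nil hWB hB
  | append_singleton h x ih =>
    obtain ⟨hvh, hxh, hx, hne⟩ := validHist_snoc.mp hv
    obtain ⟨hfh, hfx⟩ := follows_snoc.mp hf
    have hinv := ih hvh hfh
    rcases Nat.mod_two_eq_zero_or_one h.length with hpar | hpar
    · rw [hfx (mover_of_even p hpar)]
      exact (hinv.snoc_self rfl hσ hτ hdisj hne hpar).2.2
    · exact hinv.snoc_other rfl hσ hdm hdisj hne hpar hx hxh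

lemma fills_of_complete {h : List ℕ} {qs ps : SHist} (hinv : UnionInv A B p σ m h qs ps)
    (hWA : WellFormed A) (hWB : WellFormed B) (hσ : Ensures A p σ d)
    (hv : ValidHist (gunion A B) p h) (hc : Complete (gunion A B) p h) :
    fills ((gunion A B).edges p) (picked p p h) := by
  by_contra hn
  apply hn ∘ hinv.fills_of_sEnded_A hσ
  rcases hc with hend | hfull
  · rcases ((ended_iff_player _ p p h).mp hend).resolve_left hn with ⟨e, he, hsub⟩
    rw [gunion_edges] at he
    rcases Finset.mem_union.mp he with heA | heB
    · refine .inr (.inl ⟨e, heA, ?_⟩)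
      rw [hinv.simA.tracks]
      exact Finset.subset_inter hsub (hWA.subset heA)
    · refine hinv.sEnded_of_fills ⟨e, heB, ?_⟩
      rw [hinv.simB.tracks]
      exact Finset.subset_inter hsub (hWB.subset heB)
  · refine .inr (.inr fun y hy => ?_)
    rw [hinv.simA.tracks.allPicks_toFinset, hv.toFinset_eq_of_length hfull]
    exact Finset.mem_inter.mpr ⟨Finset.mem_union_left _ hy, hy⟩

end UnionInv

theorem winsAs_gunion {A B : Game} {p : Player} {d m : ℕ} (hWA : WellFormed A)
    (hWB : WellFormed B) (hdisj : Disjoint A.V B.V) (hA : canEnsure A p d)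
    (hB : ¬ CanEnsureFrom B p.other m []) (hdm : d ≤ m) : WinsAs (gunion A B) p p := by
  obtain ⟨σ, hσ⟩ : ∃ σ, Ensures A p σ d := hA
  obtain ⟨τ, hτ⟩ := exists_spoils B p.other m
  have hinv := UnionInv.of_follows hWB hB hσ hτ hdm hdisj
  refine ⟨unionStrategy A B p σ τ, fun h hv hf hne _ hm => ?_, fun h hv hf hc =>
    (hinv h hv hf).fills_of_complete hWA hWB hσ hv hc⟩
  exact ((hinv h hv hf).snoc_self rfl hσ hτ hdisj hne ((mover_eq_self_iff p _).mp hm)).imp_right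
    And.left

lemma gunion_comm (A B : Game) : gunion A B = gunion B A := by
  simp [gunion, Finset.union_comm]

lemma canEnsure_delay {G : Game} {p : Player} (hwin : WinsAs G p p) :
    canEnsure G p (delay G p) :=
  Nat.sInf_mem (s := {n | canEnsure G p n}) ⟨_, canEnsure_of_winsAs hwin⟩

/-- If Left wins `G` as first player and Right wins `G'` as first player, then:
if the Left-delay of `G` is at most the Right-delay of `G'`, Left has a winning strategy
on `G ∪ G'` as first player, and if the Right-delay of `G'` is at most the Left-delay of
`G`, Right has a winning strategy on `G ∪ G'` as first player. -/
theorem union_delay (G G' : Game) (hG : WellFormed G) (hG' : WellFormed G')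
    (hdisj : Disjoint G.V G'.V)
    (hL : WinsAs G .L .L) (hR : WinsAs G' .R .R) :
    (delay G .L ≤ delay G' .R → WinsAs (gunion G G') .L .L) ∧
    (delay G' .R ≤ delay G .L → WinsAs (gunion G G') .R .R) := by
  refine ⟨fun hle => winsAs_gunion hG hG' hdisj (canEnsure_delay hL)
    (not_canEnsureFrom_delay G' .R) hle, fun hle => ?_⟩
  rw [gunion_comm]
  exact winsAs_gunion hG' hG hdisj.symm (canEnsure_delay hR) (not_canEnsureFrom_delay G .L) hle

end APG
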